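/- There exists an absolute constant δ > 0 with the following property: for every totally real number field k of degree d ≥ 2 with real embeddings v₁, …, v_d : k → ℝ and every integer t with 1 ≤ t ≤ d, there exist t pairwise distinct elements θ₁, …, θ_t ∈ 𝓞_k such that for each i: v_i(θ_i) > 1, |v_j(θ_i)| < 1 for all j ≠ i, ℚ(θ_i) = k, and |N_{k/ℚ}(1 − θ_i)| < |Δ_k|^δ; and the element α = (1 − θ₁)⋯(1 − θ_t) satisfies v_j(α) < 0 for 1 ≤ j ≤ t and v_j(α) > 0 for t < j ≤ d. -/

import Mathlib

/-!
Minkowski's theorem gives a nonzero integer `a` with `w a < 1` at every real place `w` but one,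
`w₀`, where `w₀ a < √|Δ| + 1`. Since `|N a| ≥ 1`, also `w₀ a > 1`, so a suitable sign `θ = ±a` is a
Pisot number for the embedding of `w₀`, and it generates `k` because it is separated from its
conjugates. Bounding `|1 - θ|` by `2 + √|Δ|` at `w₀` and by `2` elsewhere, and using
`2^d ≤ (9/4)|Δ|`, gives `|N(1 - θ)| ≤ |Δ| 2^d < |Δ|^3`. Finally `1 - θ_i` is negative exactly at
the place of `θ_i`, which fixes the signs of `α`.
-/

open NumberField InfinitePlace Module
open scoped IntermediateField

theorem prod_one_sub_neg_of_one_lt {ι R : Type*} [Fintype ι] [CommRing R] [LinearOrder R]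
    [IsStrictOrderedRing R] {f : ι → R} {i₀ : ι} (h₀ : 1 < f i₀) (h : ∀ i ≠ i₀, f i < 1) :
    ∏ i, (1 - f i) < 0 := by
  classical
  rw [← Finset.mul_prod_erase _ _ (Finset.mem_univ i₀)]
  exact mul_neg_of_neg_of_pos (sub_neg.mpr h₀)
    (Finset.prod_pos fun i hi ↦ sub_pos.mpr (h i (Finset.ne_of_mem_erase hi)))

namespace NumberField

variable {K : Type*} [Field K]

theorem isTotallyReal_of_forall_im_eq_zero (h : ∀ φ : K →+* ℂ, ∀ x, (φ x).im = 0) :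
    IsTotallyReal K where
  isReal w := by
    rw [← mk_embedding w, isReal_mk_iff, ComplexEmbedding.isReal_iff]
    ext x
    simp [Complex.conj_eq_iff_im.mpr (h _ x)]

def IsPisot (ψ : K →+* ℝ) (θ : K) : Prop :=
  1 < ψ θ ∧ ∀ φ : K →+* ℝ, φ ≠ ψ → |φ θ| < 1

theorem IsPisot.ne {ψ φ : K →+* ℝ} {θ η : K} (hθ : IsPisot ψ θ) (hη : IsPisot φ η)
    (hψφ : ψ ≠ φ) : θ ≠ η := by
  rintro rfl
  linarith [hθ.1, (abs_lt.mp (hη.2 ψ hψφ)).2]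

namespace InfinitePlace

noncomputable def ofReal (ψ : K →+* ℝ) : InfinitePlace K :=
  mk (Complex.ofRealHom.comp ψ)

theorem ofReal_apply (ψ : K →+* ℝ) (x : K) : ofReal ψ x = |ψ x| := by
  simp [ofReal, apply, Complex.norm_real]

theorem ofReal_injective : Function.Injective (ofReal (K := K)) := by
  intro ψ φ h
  have hconj :
      ComplexEmbedding.conjugate (Complex.ofRealHom.comp ψ) = Complex.ofRealHom.comp ψ := by
    ext x
    simp [ComplexEmbedding.conjugate_coe_eq]
  rw [ofReal, ofReal, mk_eq_iff, hconj, or_self] at h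
  exact RingHom.ext fun x ↦ Complex.ofReal_injective (RingHom.congr_fun h x)

end InfinitePlace

variable [NumberField K]

theorem one_le_abs_norm_of_ne_zero {a : 𝓞 K} (ha : a ≠ 0) :
    (1 : ℝ) ≤ |(Algebra.norm ℚ (a : K) : ℝ)| := by
  rw [← Algebra.coe_norm_int, Rat.cast_intCast, ← Int.cast_abs]
  exact_mod_cast Int.one_le_abs (Algebra.norm_ne_zero_iff.mpr ha)

theorem InfinitePlace.one_lt_of_lt_one [Nontrivial (InfinitePlace K)] {w : InfinitePlace K}
    {a : 𝓞 K} (ha : a ≠ 0) (h : ∀ ⦃z⦄, z ≠ w → z a < 1) : 1 < w a := by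
  refine lt_of_le_of_ne (one_le_of_lt_one ha h) fun hw ↦ ?_
  obtain ⟨z, hz⟩ := exists_ne w
  have hpos : ∀ y : InfinitePlace K, 0 < y a :=
    fun y ↦ pos_iff.mpr (RingOfIntegers.coe_ne_zero_iff.mpr ha)
  have hle : ∀ y : InfinitePlace K, y a ≤ 1 := fun y ↦ by
    rcases eq_or_ne y w with rfl | hy
    · exact hw.ge
    · exact (h hy).le
  have : |(Algebra.norm ℚ (a : K) : ℝ)| < 1 := by
    rw [← Rat.cast_abs, ← prod_eq_abs_norm, ← Finset.prod_const_one]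
    refine Finset.prod_lt_prod (fun y _ ↦ pow_pos (hpos y) _)
      (fun y _ ↦ pow_le_one₀ (hpos y).le (hle y)) ⟨z, Finset.mem_univ _, ?_⟩
    exact pow_lt_one₀ (hpos z).le (h hz) mult_ne_zero
  exact this.not_ge (one_le_abs_norm_of_ne_zero ha)

section TotallyReal

variable [IsTotallyReal K]

theorem IsTotallyReal.card_infinitePlace : Fintype.card (InfinitePlace K) = finrank ℚ K := by
  rw [card_eq_nrRealPlaces_add_nrComplexPlaces, IsTotallyReal.nrComplexPlaces_eq_zero,
    IsTotallyReal.finrank, add_zero]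

theorem IsTotallyReal.abs_norm_eq_prod (x : K) :
    |(Algebra.norm ℚ x : ℝ)| = ∏ w : InfinitePlace K, w x := by
  simp [← Rat.cast_abs, ← prod_eq_abs_norm]

open mixedEmbedding MeasureTheory in
/-- Minkowski's convex body theorem for the box `w₀ < √|Δ| + 1`, `w < 1` (`w ≠ w₀`), whose volume
`2^d (√|Δ| + 1)` exceeds the Minkowski bound `2^d √|Δ|`. -/
theorem exists_ne_zero_lt_sqrt_abs_discr_add_one (w₀ : InfinitePlace K) :
    ∃ a : 𝓞 K, a ≠ 0 ∧ w₀ a < √|(discr K : ℝ)| + 1 ∧ ∀ ⦃w⦄, w ≠ w₀ → w a < 1 := by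
  classical
  set B : NNReal := NNReal.sqrt ‖discr K‖₊ + 1
  have hB : minkowskiBound K ↑1 < convexBodyLTFactor K * B := by
    have hmb : minkowskiBound K ↑1 = NNReal.sqrt ‖discr K‖₊ * 2 ^ finrank ℚ K := by
      rw [minkowskiBound, volume_fundamentalDomain_fractionalIdealLatticeBasis,
        volume_fundamentalDomain_latticeBasis, mixedEmbedding.finrank,
        IsTotallyReal.nrComplexPlaces_eq_zero]
      simp [FractionalIdeal.absNorm_one]
    rw [hmb, convexBodyLTFactor, IsTotallyReal.nrComplexPlaces_eq_zero, ← IsTotallyReal.finrank,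
      pow_zero, mul_one, mul_comm, ENNReal.coe_pow]
    refine (ENNReal.mul_lt_mul_iff_right (by positivity)
      (ENNReal.pow_ne_top ENNReal.ofNat_ne_top)).mpr ?_
    exact_mod_cast lt_add_one _
  have hvol :
      minkowskiBound K ↑1 < volume (convexBodyLT K (fun w ↦ if w = w₀ then B else 1)) := by
    rw [convexBodyLT_volume, ← Finset.prod_erase_mul _ _ (Finset.mem_univ w₀)]
    simp_rw [ite_pow, one_pow]
    rw [Finset.prod_ite_eq']
    simp_rw [Finset.notMem_erase, ite_false, IsTotallyReal.mult_eq, one_mul, pow_one]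
    exact hB
  obtain ⟨a, ha, hlt⟩ := exists_ne_zero_mem_ringOfIntegers_lt K hvol
  refine ⟨a, ha, ?_, fun w hw ↦ by simpa [hw] using hlt w⟩
  simpa [B, Int.norm_eq_abs] using hlt w₀

theorem abs_norm_one_sub_le {w₀ : InfinitePlace K} {x : K} {B : ℝ} (h₀ : w₀ x ≤ B)
    (h : ∀ ⦃w⦄, w ≠ w₀ → w x ≤ 1) :
    |(Algebra.norm ℚ (1 - x) : ℝ)| ≤ (1 + B) * 2 ^ (finrank ℚ K - 1) := by
  classical
  have hfac (w : InfinitePlace K) : w (1 - x) ≤ 1 + w x := by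
    show w.1 (1 - x) ≤ 1 + w.1 x
    simpa [sub_eq_add_neg] using w.1.add_le 1 (-x)
  have hcard : (Finset.univ.erase w₀).card = finrank ℚ K - 1 := by
    rw [Finset.card_erase_of_mem (Finset.mem_univ _), Finset.card_univ,
      IsTotallyReal.card_infinitePlace]
  rw [IsTotallyReal.abs_norm_eq_prod, ← Finset.mul_prod_erase _ _ (Finset.mem_univ w₀), ← hcard,
    ← Finset.prod_const]
  refine mul_le_mul (by linarith [hfac w₀]) ?_ (Finset.prod_nonneg fun w _ ↦ apply_nonneg w _)
    (by linarith [apply_nonneg w₀ x])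
  exact Finset.prod_le_prod (fun w _ ↦ apply_nonneg w _)
    fun w hw ↦ by linarith [hfac w, h (Finset.ne_of_mem_erase hw)]

end TotallyReal

theorem two_pow_finrank_le_abs_discr (h : 1 < finrank ℚ K) :
    (2 : ℝ) ^ finrank ℚ K ≤ 9 / 4 * |(discr K : ℝ)| := by
  have hπ : (2 : ℝ) ≤ 3 * Real.pi / 4 := by linarith [Real.pi_gt_three]
  have := abs_discr_ge h
  rw [Int.cast_abs] at this
  calc (2 : ℝ) ^ finrank ℚ K ≤ (3 * Real.pi / 4) ^ finrank ℚ K := by gcongr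
    _ ≤ _ := by linarith

theorem exists_isPisot_adjoin_eq_top_abs_norm_one_sub_lt [IsTotallyReal K]
    (hd : 2 ≤ finrank ℚ K) (ψ : K →+* ℝ) :
    ∃ θ : 𝓞 K, IsPisot ψ θ ∧ ℚ⟮(θ : K)⟯ = ⊤ ∧
      |(Algebra.norm ℚ (1 - (θ : K)) : ℝ)| < |(discr K : ℝ)| ^ 3 := by
  have : Nontrivial (InfinitePlace K) := Fintype.one_lt_card_iff_nontrivial.mp <| by
    rw [IsTotallyReal.card_infinitePlace]; omega
  set w₀ := InfinitePlace.ofReal ψ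
  obtain ⟨a, ha, haB, hlt⟩ := exists_ne_zero_lt_sqrt_abs_discr_add_one w₀
  obtain ⟨θ, hθ0, hθψ, hθw⟩ :
      ∃ θ : 𝓞 K, θ ≠ 0 ∧ ψ θ = w₀ a ∧ ∀ w : InfinitePlace K, w θ = w a := by
    rcases le_or_gt 0 (ψ a) with h | h
    · exact ⟨a, ha, by rw [ofReal_apply, abs_of_nonneg h], fun _ ↦ rfl⟩
    · exact ⟨-a, neg_ne_zero.mpr ha, by push_cast; rw [map_neg, ofReal_apply, abs_of_neg h],
        fun w ↦ by push_cast; exact w.1.map_neg (a : K)⟩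
  refine ⟨θ, ⟨hθψ ▸ one_lt_of_lt_one ha hlt, fun φ hφ ↦ ?_⟩, ?_, ?_⟩
  · rw [← ofReal_apply, hθw]
    exact hlt (ofReal_injective.ne hφ)
  · exact is_primitive_element_of_infinitePlace_lt hθ0 (fun w hw ↦ hθw w ▸ hlt hw)
      (Or.inl (IsTotallyReal.isReal _))
  set D := |(discr K : ℝ)|
  have hD : 3 ≤ D := by
    have : 3 ≤ |discr K| := abs_discr_gt_two (by omega)
    simp only [D, ← Int.cast_abs]
    exact_mod_cast this
  have hsqrt : √D ≤ D := Real.sqrt_le_self_iff.mpr (Or.inr (by linarith))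
  calc |(Algebra.norm ℚ (1 - (θ : K)) : ℝ)| ≤ (1 + (√D + 1)) * 2 ^ (finrank ℚ K - 1) :=
        abs_norm_one_sub_le (w₀ := w₀) (by rw [hθw]; exact haB.le)
          fun w hw ↦ by rw [hθw]; exact (hlt hw).le
    _ ≤ 2 * D * 2 ^ (finrank ℚ K - 1) := by gcongr; linarith
    _ = D * 2 ^ finrank ℚ K := by
      rw [mul_comm 2 D, mul_assoc, ← pow_succ', Nat.sub_add_cancel (by omega)]
    _ ≤ D * (9 / 4 * D) := by gcongr; exact two_pow_finrank_le_abs_discr (by omega)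
    _ < D ^ 3 := by nlinarith [pow_pos (show 0 < D by linarith) 2]

end NumberField

/-- There is an absolute `δ > 0` such that every totally real number field `k` of degree
`d ≥ 2` contains, for every `1 ≤ t ≤ d`, pairwise distinct Pisot numbers `θ₁, …, θ_t`
(each generating `k` and with `|N_{k/ℚ}(1 − θ_i)| < |Δ_k|^δ`) such that
`α = (1 − θ₁)⋯(1 − θ_t)` is negative at the first `t` real places and positive at the rest. -/
theorem stmt_7 :
    ∃ δ : ℝ, 0 < δ ∧
      ∀ (k : Type) [Field k] [NumberField k],
        (∀ φ : k →+* ℂ, ∀ x : k, (φ x).im = 0) →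
        2 ≤ Module.finrank ℚ k →
        ∀ (v : Fin (Module.finrank ℚ k) → (k →+* ℝ)), Function.Bijective v →
        ∀ t : ℕ, 1 ≤ t → ∀ (ht : t ≤ Module.finrank ℚ k),
          ∃ θ : Fin t → 𝓞 k, Function.Injective θ ∧
            (∀ i : Fin t,
              1 < v (Fin.castLE ht i) (θ i : k) ∧
              (∀ j, j ≠ Fin.castLE ht i → |v j (θ i : k)| < 1) ∧
              IntermediateField.adjoin ℚ {(θ i : k)} = ⊤ ∧
              |((Algebra.norm ℚ (1 - (θ i : k)) : ℚ) : ℝ)| <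
                |(NumberField.discr k : ℝ)| ^ δ) ∧
            (∀ j : Fin (Module.finrank ℚ k),
              ((j : ℕ) < t → v j (∏ i, (1 - (θ i : k))) < 0) ∧
              (t ≤ (j : ℕ) → 0 < v j (∏ i, (1 - (θ i : k))))) := by
  refine ⟨3, by norm_num, fun k _ _ hreal hd v hv t _ ht ↦ ?_⟩
  have : IsTotallyReal k := isTotallyReal_of_forall_im_eq_zero hreal
  choose θ hθ hθ_gen hθ_norm using
    fun i : Fin t ↦ exists_isPisot_adjoin_eq_top_abs_norm_one_sub_lt hd (v (Fin.castLE ht i))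
  have hlt (i : Fin t) (j) (hj : j ≠ Fin.castLE ht i) : v j (θ i) < 1 :=
    (abs_lt.mp ((hθ i).2 _ (hv.1.ne hj))).2
  refine ⟨θ, fun i₁ i₂ h ↦ ?_, fun i ↦ ?_, fun j ↦ ?_⟩
  · by_contra hne
    exact (hθ i₁).ne (hθ i₂) (hv.1.ne ((Fin.castLE_injective ht).ne hne)) (congrArg _ h)
  · exact ⟨(hθ i).1, fun j hj ↦ (hθ i).2 _ (hv.1.ne hj), hθ_gen i, by exact_mod_cast hθ_norm i⟩
  simp only [map_prod, map_sub, map_one]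
  refine ⟨fun hj ↦ ?_, fun hj ↦ Finset.prod_pos fun i _ ↦ ?_⟩
  · refine prod_one_sub_neg_of_one_lt (i₀ := ⟨j, hj⟩) (hθ ⟨j, hj⟩).1 fun i hi ↦ ?_
    exact hlt i j fun h ↦ hi (Fin.ext (by simp [h]))
  · exact sub_pos.mpr (hlt i j (ne_of_gt (Fin.lt_def.mpr (by simp; omega))))
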